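/- arXiv:2504.16747 — 4 statements merged into one kernel-verified Lean document; each statement's English description precedes it below -/
import Mathlib

section
/- MZV duality in weight 3: ζ(3) = ζ(2,1), i.e. ∑_{n≥1} 1/n³ = ∑_{n>m≥1} 1/(n²m). -/
/-!
Write `ζ(2,1) = ∑_{x,y ≥ 1} 1 / ((x + y)² y)` (that is, `n = x + y`, `m = y`). Symmetrising in
`x, y` gives `2 ζ(2,1) = ∑_{x,y ≥ 1} 1 / (x y (x + y))`, Tornheim's sum `T(1,1,1)`. Summing it over
`y` first, the partial fraction `1 / (x y (x + y)) = x⁻² (1 / y - 1 / (x + y))` telescopes to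
`H_x / x²`, so `2 ζ(2,1) = ∑_x H_x / x² = ∑_x H_{x-1} / x² + ∑_x 1 / x³ = ζ(2,1) + ζ(3)`.
Absolute convergence, which licenses all rearrangements, follows from
`1 / (x y (x + y)) ≤ (x y)^(-3/2)`.
-/

open Filter Finset Topology

namespace MZV

theorem hasSum_sub_add_of_antitone {f : ℕ → ℝ} (hf : Antitone f)
    (hf0 : Tendsto f atTop (𝓝 0)) (k : ℕ) :
    HasSum (fun n ↦ f n - f (n + k)) (∑ i ∈ range k, f i) := by
  rw [hasSum_iff_tendsto_nat_of_nonneg fun n ↦ sub_nonneg.2 (hf (Nat.le_add_right n k))]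
  have hpartial (N : ℕ) : ∑ n ∈ range N, (f n - f (n + k))
      = ∑ i ∈ range k, f i - ∑ i ∈ range k, f (N + i) := by
    have h₁ := sum_range_add f N k
    have h₂ := sum_range_add f k N
    rw [Nat.add_comm k N] at h₂
    simp only [sum_sub_distrib, Nat.add_comm _ k]
    linarith
  have htail : Tendsto (fun N ↦ ∑ i ∈ range k, f (N + i)) atTop (𝓝 0) := by
    simpa using tendsto_finsetSum (range k) fun i _ ↦ hf0.comp (tendsto_add_atTop_nat i)
  simpa [hpartial] using tendsto_const_nhds.sub htail

theorem hasSum_one_div_sub_one_div_add (k : ℕ) :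
    HasSum (fun n : ℕ ↦ 1 / ((n : ℝ) + 1) - 1 / ((n : ℝ) + 1 + k)) (harmonic k) := by
  have hanti : Antitone fun n : ℕ ↦ 1 / ((n : ℝ) + 1) := fun m n hmn ↦
    one_div_le_one_div_of_le (by positivity) (by gcongr)
  convert hasSum_sub_add_of_antitone hanti tendsto_one_div_add_atTop_nhds_zero_nat k using 1
  · ext n
    push_cast
    ring
  · simp [harmonic]

noncomputable def zeta21Term (x y : ℝ) : ℝ := 1 / ((x + y) ^ 2 * y)

noncomputable def tornheimTerm (x y : ℝ) : ℝ := 1 / (x * y * (x + y))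

section Terms

variable {x y : ℝ}

theorem zeta21Term_nonneg (hy : 0 ≤ y) : 0 ≤ zeta21Term x y := by
  unfold zeta21Term
  positivity

theorem tornheimTerm_nonneg (hx : 0 ≤ x) (hy : 0 ≤ y) : 0 ≤ tornheimTerm x y := by
  unfold tornheimTerm
  positivity

theorem zeta21Term_add_swap (hx : x ≠ 0) (hy : y ≠ 0) (hxy : x + y ≠ 0) :
    zeta21Term x y + zeta21Term y x = tornheimTerm x y := by
  rw [zeta21Term, zeta21Term, tornheimTerm, add_comm y x]
  field_simp

theorem tornheimTerm_eq (hx : x ≠ 0) (hy : y ≠ 0) (hxy : x + y ≠ 0) :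
    tornheimTerm x y = 1 / x ^ 2 * (1 / y - 1 / (x + y)) := by
  rw [tornheimTerm]
  field_simp
  ring

theorem tornheimTerm_le_rpow (hx : 0 < x) (hy : 0 < y) :
    tornheimTerm x y ≤ 1 / x ^ (3 / 2 : ℝ) * (1 / y ^ (3 / 2 : ℝ)) := by
  have hxy : 0 < x * y := mul_pos hx hy
  have hpow : (x * y) ^ (3 / 2 : ℝ) = x * y * √(x * y) := by
    rw [show (3 / 2 : ℝ) = 1 + 1 / 2 by norm_num, Real.rpow_add hxy, Real.rpow_one,
      Real.sqrt_eq_rpow]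
  have hsqrt : √(x * y) ≤ x + y := Real.sqrt_le_iff.2 ⟨by positivity, by nlinarith⟩
  rw [tornheimTerm, div_mul_div_comm, one_mul, ← Real.mul_rpow hx.le hy.le, hpow]
  gcongr

end Terms

theorem summable_tornheimTerm :
    Summable fun p : ℕ × ℕ ↦ tornheimTerm (p.1 + 1) (p.2 + 1) := by
  have h : Summable fun n : ℕ ↦ 1 / ((n : ℝ) + 1) ^ (3 / 2 : ℝ) := by
    simpa using (summable_nat_add_iff 1).2
      (Real.summable_one_div_nat_rpow.2 (by norm_num : (1 : ℝ) < 3 / 2))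
  refine (h.mul_of_nonneg h (fun _ ↦ by positivity) (fun _ ↦ by positivity)).of_nonneg_of_le
    (fun p ↦ tornheimTerm_nonneg (by positivity) (by positivity))
    (fun p ↦ tornheimTerm_le_rpow (by positivity) (by positivity))

theorem summable_zeta21Term :
    Summable fun p : ℕ × ℕ ↦ zeta21Term (p.1 + 1) (p.2 + 1) :=
  summable_tornheimTerm.of_nonneg_of_le (fun p ↦ zeta21Term_nonneg (by positivity)) fun p ↦ by
    rw [← zeta21Term_add_swap (by positivity) (by positivity) (by positivity)]
    exact le_add_of_nonneg_right (zeta21Term_nonneg (by positivity))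

noncomputable def zeta21Summand (n m : ℕ) : ℝ :=
  if 0 < m ∧ m < n then 1 / ((n : ℝ) ^ 2 * (m : ℝ)) else 0

noncomputable def zeta21 : ℝ := ∑' p : ℕ × ℕ, zeta21Summand p.1 p.2

def zeta21Index (p : ℕ × ℕ) : ℕ × ℕ := (p.1 + p.2 + 2, p.2 + 1)

theorem zeta21Index_injective : Function.Injective zeta21Index := by
  rintro ⟨a, b⟩ ⟨c, d⟩ h
  simp only [zeta21Index, Prod.mk.injEq] at h ⊢
  omega

theorem zeta21Summand_eq_zero_of_notMem_range {p : ℕ × ℕ} (hp : p ∉ Set.range zeta21Index) :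
    zeta21Summand p.1 p.2 = 0 := by
  obtain ⟨n, m⟩ := p
  refine if_neg fun h ↦ hp ⟨(n - m - 1, m - 1), ?_⟩
  simp only [zeta21Index, Prod.mk.injEq]
  omega

theorem zeta21Summand_zeta21Index (p : ℕ × ℕ) :
    zeta21Summand (zeta21Index p).1 (zeta21Index p).2 = zeta21Term (p.1 + 1) (p.2 + 1) := by
  obtain ⟨a, b⟩ := p
  show zeta21Summand (a + b + 2) (b + 1) = _
  rw [zeta21Summand, if_pos (by omega), zeta21Term]
  push_cast
  ring_nf

theorem summable_zeta21Summand : Summable fun p : ℕ × ℕ ↦ zeta21Summand p.1 p.2 := by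
  rw [← zeta21Index_injective.summable_iff fun p ↦ zeta21Summand_eq_zero_of_notMem_range]
  exact summable_zeta21Term.congr fun p ↦ (zeta21Summand_zeta21Index p).symm

theorem hasSum_zeta21Term :
    HasSum (fun p : ℕ × ℕ ↦ zeta21Term (p.1 + 1) (p.2 + 1)) zeta21 := by
  have h := (zeta21Index_injective.hasSum_iff fun p ↦ zeta21Summand_eq_zero_of_notMem_range).2
    summable_zeta21Summand.hasSum
  exact h.congr_fun fun p ↦ (zeta21Summand_zeta21Index p).symm

theorem hasSum_tornheimTerm :
    HasSum (fun p : ℕ × ℕ ↦ tornheimTerm (p.1 + 1) (p.2 + 1)) (2 * zeta21) := by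
  have hswap := (Equiv.prodComm ℕ ℕ).hasSum_iff.2 hasSum_zeta21Term
  rw [two_mul]
  exact (hasSum_zeta21Term.add hswap).congr_fun fun p ↦
    (zeta21Term_add_swap (by positivity) (by positivity) (by positivity)).symm

theorem hasSum_tornheimTerm_row (a : ℕ) : HasSum (fun b : ℕ ↦ tornheimTerm (a + 1) (b + 1))
    (harmonic (a + 1) / ((a : ℝ) + 1) ^ 2) := by
  have h := (hasSum_one_div_sub_one_div_add (a + 1)).mul_left (1 / ((a : ℝ) + 1) ^ 2)
  rw [one_div_mul_eq_div] at h
  refine h.congr_fun fun b ↦ ?_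
  rw [tornheimTerm_eq (by positivity) (by positivity) (by positivity)]
  push_cast
  ring

theorem hasSum_harmonic_succ_div_sq :
    HasSum (fun n : ℕ ↦ (harmonic (n + 1) : ℝ) / ((n : ℝ) + 1) ^ 2) (2 * zeta21) :=
  hasSum_tornheimTerm.prod_fiberwise hasSum_tornheimTerm_row

theorem hasSum_zeta21Summand_succ (n : ℕ) :
    HasSum (fun m ↦ zeta21Summand (n + 1) m) (harmonic n / ((n : ℝ) + 1) ^ 2) := by
  have hsupp : ∀ m ∉ Icc 1 n, zeta21Summand (n + 1) m = 0 := fun m hm ↦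
    if_neg (by simp only [mem_Icc] at hm; omega)
  have hvalue :
      (harmonic n : ℝ) / ((n : ℝ) + 1) ^ 2 = ∑ m ∈ Icc 1 n, zeta21Summand (n + 1) m := by
    rw [harmonic_eq_sum_Icc, Rat.cast_sum, sum_div]
    refine sum_congr rfl fun m hm ↦ ?_
    rw [zeta21Summand, if_pos (by simp only [mem_Icc] at hm; omega)]
    push_cast
    field_simp
  rw [hvalue]
  exact hasSum_sum_of_ne_finset_zero hsupp

theorem hasSum_harmonic_div_sq :
    HasSum (fun n : ℕ ↦ (harmonic n : ℝ) / ((n : ℝ) + 1) ^ 2) zeta21 := by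
  have hrows := summable_zeta21Summand.hasSum.prod_fiberwise fun n ↦
    (summable_zeta21Summand.prod_factor n).hasSum
  have hrow_zero : ∑' m, zeta21Summand 0 m = 0 := by simp [zeta21Summand]
  rw [← hasSum_nat_add_iff' 1] at hrows
  simp only [sum_range_one, hrow_zero, sub_zero, (hasSum_zeta21Summand_succ _).tsum_eq] at hrows
  exact hrows

end MZV

theorem mzv_duality_wt3 :
    ∑' n : ℕ, 1 / (n : ℝ) ^ 3
      = ∑' n : ℕ, ∑' m : ℕ,
          if 0 < m ∧ m < n then 1 / ((n : ℝ) ^ 2 * (m : ℝ)) else 0 := by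
  have hzeta3 : HasSum (fun n : ℕ ↦ 1 / ((n : ℝ) + 1) ^ 3) (∑' n : ℕ, 1 / (n : ℝ) ^ 3) := by
    have h := (Real.summable_one_div_nat_pow.2 (by norm_num : 1 < 3)).hasSum
    -- the `n = 0` term is `1 / 0 = 0`
    rw [← hasSum_nat_add_iff' 1] at h
    simpa using h
  have hsum : HasSum (fun n : ℕ ↦ (harmonic (n + 1) : ℝ) / ((n : ℝ) + 1) ^ 2)
      (MZV.zeta21 + ∑' n : ℕ, 1 / (n : ℝ) ^ 3) := by
    refine (MZV.hasSum_harmonic_div_sq.add hzeta3).congr_fun fun n ↦ ?_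
    rw [harmonic_succ]
    push_cast
    field_simp
  have hzeta21 : MZV.zeta21 = ∑' n : ℕ, ∑' m : ℕ,
      if 0 < m ∧ m < n then 1 / ((n : ℝ) ^ 2 * (m : ℝ)) else 0 :=
    MZV.summable_zeta21Summand.tsum_prod
  linarith [MZV.hasSum_harmonic_succ_div_sq.unique hsum]
end

section
/- Self-dual evaluation: ζ(3,1) = ζ(4)/4, i.e. ∑_{n>m≥1} 1/(n³m) = (1/4)∑_{n≥1} 1/n⁴. -/
noncomputable def zetaS (s : ℕ) : ℝ := ∑' n : ℕ, 1 / (n : ℝ) ^ s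

noncomputable def zetaD (s t : ℕ) : ℝ :=
  ∑' n : ℕ, ∑' m : ℕ, if 0 < m ∧ m < n then 1 / ((n : ℝ) ^ s * (m : ℝ) ^ t) else 0

open Finset Real Filter

-- telescoping sum
lemma tele (k : ℕ) :
    HasSum (fun n : ℕ => (1:ℝ)/(n+k+1) - 1/(n+k+2)) (1/(k+1)) := by
  have hnn : ∀ i : ℕ, 0 ≤ (1:ℝ)/(i+k+1) - 1/(i+k+2) := by
    intro i
    have h1 : (0:ℝ) < i+k+1 := by positivity
    have h2 : (i+k+1:ℝ) ≤ i+k+2 := by linarith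
    have := one_div_le_one_div_of_le h1 h2
    linarith
  rw [hasSum_iff_tendsto_nat_of_nonneg hnn]
  have hps : ∀ N : ℕ, ∑ n ∈ range N, ((1:ℝ)/(n+k+1) - 1/(n+k+2)) = 1/(k+1) - 1/(N+k+1) := by
    intro N
    have h := Finset.sum_range_sub' (fun n : ℕ => (1:ℝ)/(n+k+1)) N
    have h2 : ∑ n ∈ range N, ((1:ℝ)/(n+k+1) - 1/(n+k+2))
        = ∑ i ∈ range N, ((1:ℝ)/(i+k+1) - 1/((i+1:ℕ)+k+1)) := by
      apply Finset.sum_congr rfl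
      intro i _
      push_cast
      ring_nf
    rw [h2, h]
    push_cast
    norm_num
  simp only [hps]
  have h1 : Tendsto (fun N : ℕ => 1/((N:ℝ)+k+1)) atTop (nhds 0) := by
    simp only [one_div]
    apply Tendsto.comp tendsto_inv_atTop_zero
    · exact tendsto_atTop_add_const_right _ _ (tendsto_atTop_add_const_right _ _ tendsto_natCast_atTop_atTop)
  simpa using tendsto_const_nhds.sub h1

lemma inner_hasSum (m : ℕ) :
    HasSum (fun n : ℕ => (1:ℝ)/((n+1)*(n+1+(m+1))))
      ((1/(m+1)) * ∑ k ∈ range (m+1), (1:ℝ)/(k+1)) := by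
  have hsum : HasSum (fun n : ℕ => ∑ k ∈ range (m+1), ((1:ℝ)/(n+k+1) - 1/(n+k+2)))
      (∑ k ∈ range (m+1), (1:ℝ)/(k+1)) := by
    exact hasSum_sum fun k _ => tele k
  have key : ∀ n : ℕ, ∑ k ∈ range (m+1), ((1:ℝ)/(n+k+1) - 1/(n+k+2))
      = (m+1) * ((1:ℝ)/((n+1)*(n+1+(m+1)))) := by
    intro n
    have h2 : ∑ k ∈ range (m+1), ((1:ℝ)/(n+k+1) - 1/(n+k+2))
        = ∑ k ∈ range (m+1), ((1:ℝ)/(n+k+1) - 1/(n+(k+1:ℕ)+1)) := by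
      apply Finset.sum_congr rfl
      intro i _
      push_cast
      ring_nf
    rw [h2, Finset.sum_range_sub' (fun k : ℕ => (1:ℝ)/(n+k+1)) (m+1)]
    have hn : (0:ℝ) < n+1 := by positivity
    have hm : (0:ℝ) < (n:ℝ)+1+(m+1) := by positivity
    push_cast
    have e1 : ((n:ℝ) + 0 + 1 : ℝ) = (n:ℝ) + 1 := by ring
    have e2 : ((n:ℝ) + ((m:ℝ) + 1) + 1 : ℝ) = (n:ℝ) + 1 + ((m:ℝ)+1) := by ring
    rw [e1, e2, div_sub_div _ _ hn.ne' hm.ne', mul_one_div]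
    congr 1
    ring
  simp only [key] at hsum
  have := hsum.mul_left ((1:ℝ)/(m+1))
  have he : ∀ n : ℕ, (1/((m:ℝ)+1)) * ((m+1) * ((1:ℝ)/((n+1)*(n+1+(m+1)))))
      = (1:ℝ)/((n+1)*(n+1+(m+1))) := by
    intro n
    have : ((m:ℝ)+1) ≠ 0 := by positivity
    field_simp
  simpa only [he] using this

noncomputable def F : ℕ × ℕ → ℝ := fun p => 1/((p.1:ℝ)^2 * p.2 * (p.1 + p.2))

lemma F_nonneg : ∀ p, 0 ≤ F p := by intro p; unfold F; positivity

lemma F_le (p : ℕ × ℕ) : F p ≤ (1/(p.1:ℝ)^2) * (1/(p.2:ℝ)^2) := by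
  obtain ⟨m, n⟩ := p
  rcases Nat.eq_zero_or_pos m with hm | hm
  · subst hm; simp [F]
  rcases Nat.eq_zero_or_pos n with hn | hn
  · subst hn; simp [F]
  have hm' : (0:ℝ) < m := by exact_mod_cast hm
  have hn' : (0:ℝ) < n := by exact_mod_cast hn
  have hb : (m:ℝ)^2 * n^2 ≤ (m:ℝ)^2 * n * (m+n) := by
    have h3 : (0:ℝ) ≤ (m:ℝ)^3 * n := by positivity
    nlinarith
  calc F (m,n) = 1/((m:ℝ)^2*n*(m+n)) := rfl
    _ ≤ 1/((m:ℝ)^2*(n:ℝ)^2) := one_div_le_one_div_of_le (by positivity) hb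
    _ = 1/(m:ℝ)^2 * (1/(n:ℝ)^2) := by rw [one_div_mul_one_div]

lemma z2_summable : Summable (fun n : ℕ => 1/(n:ℝ)^2) :=
  Real.summable_one_div_nat_pow.mpr (by norm_num)

set_option maxHeartbeats 2000000 in
lemma G_summable : Summable (fun p : ℕ × ℕ => (1/(p.1:ℝ)^2) * (1/(p.2:ℝ)^2)) := by
  have h0 : (0:ℕ→ℝ) ≤ fun n : ℕ => 1/(n:ℝ)^2 := fun n => by positivity
  exact z2_summable.mul_of_nonneg z2_summable h0 h0

lemma F_summable : Summable F := Summable.of_nonneg_of_le F_nonneg F_le G_summable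

lemma F_add_swap (m n : ℕ) : F (m,n) + F (n,m) = (1/(m:ℝ)^2) * (1/(n:ℝ)^2) := by
  rcases Nat.eq_zero_or_pos m with hm | hm
  · subst hm; simp [F]
  rcases Nat.eq_zero_or_pos n with hn | hn
  · subst hn; simp [F]
  have hm' : (0:ℝ) < m := by exact_mod_cast hm
  have hn' : (0:ℝ) < n := by exact_mod_cast hn
  unfold F
  simp only
  rw [div_add_div _ _ (by positivity : ((m:ℝ)^2*n*(m+n)) ≠ 0) (by positivity : ((n:ℝ)^2*m*(n+m)) ≠ 0),
    one_div_mul_one_div, div_eq_div_iff (by positivity) (by positivity)]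
  ring

lemma c_succ (m : ℕ) :
    HasSum (fun n : ℕ => F (m+1, n))
      ((1/((m:ℝ)+1)^3) * ∑ k ∈ range (m+1), (1:ℝ)/(k+1)) := by
  have h := (inner_hasSum m).mul_left ((1:ℝ)/((m:ℝ)+1)^2)
  have he : ∀ n : ℕ, (1:ℝ)/((m:ℝ)+1)^2 * ((1:ℝ)/(((n:ℝ)+1)*((n:ℝ)+1+((m:ℝ)+1))))
      = F (m+1, n+1) := by
    intro n
    unfold F
    simp only
    rw [one_div_mul_one_div]
    push_cast
    congr 1
    ring
  simp only [he] at h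
  rw [hasSum_nat_add_iff (f := fun k : ℕ => F (m+1, k)) 1] at h
  have hz : F (m+1, 0) = 0 := by unfold F; simp
  have hval : (1:ℝ)/((m:ℝ)+1)^2 * (1/((m:ℝ)+1) * ∑ k ∈ range (m+1), (1:ℝ)/(k+1))
      = (1/((m:ℝ)+1)^3) * ∑ k ∈ range (m+1), (1:ℝ)/(k+1) := by
    rw [← mul_assoc]
    congr 1
    rw [one_div_mul_one_div, ← pow_succ]
  simp only [Finset.sum_range_one, hz, add_zero] at h
  rwa [hval] at h

noncomputable def d : ℕ → ℝ :=
  fun n => ∑' m : ℕ, if 0 < m ∧ m < n then 1 / ((n:ℝ)^3 * (m:ℝ)) else 0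

lemma d_eq (n : ℕ) :
    d n = ∑ m ∈ range n, (if 0 < m ∧ m < n then 1 / ((n:ℝ)^3 * (m:ℝ)) else 0) := by
  apply tsum_eq_sum
  intro m hm
  rw [Finset.mem_range, not_lt] at hm
  rw [if_neg]
  rintro ⟨-, h2⟩
  omega

lemma c_eq (n : ℕ) : HasSum (fun k : ℕ => F (n, k)) (d n + 1/(n:ℝ)^4) := by
  rcases n with _ | m
  · have h0 : ∀ k : ℕ, F (0, k) = 0 := by intro k; unfold F; simp
    have hd : d 0 = 0 := by rw [d_eq]; simp
    simp only [h0, hd]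
    norm_num
  · have h := c_succ m
    have hval : (1/((m:ℝ)+1)^3) * ∑ k ∈ range (m+1), (1:ℝ)/(k+1)
        = d (m+1) + 1/((m+1:ℕ):ℝ)^4 := by
      rw [Finset.mul_sum, Finset.sum_range_succ, d_eq, Finset.sum_range_succ']
      have h0 : (if 0 < 0 ∧ 0 < m + 1 then 1 / (((m+1:ℕ)):ℝ)^3 * (((0:ℕ)):ℝ) else 0) = 0 := by
        rw [if_neg]
        rintro ⟨h1, -⟩
        exact absurd h1 (lt_irrefl 0)
      have hterm : ∀ x ∈ range m,
          (if 0 < x + 1 ∧ x + 1 < m + 1 then 1 / ((((m+1:ℕ)):ℝ)^3 * (((x+1:ℕ)):ℝ)) else 0)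
          = 1/((m:ℝ)+1)^3 * ((1:ℝ)/((x:ℝ)+1)) := by
        intro x hx
        rw [Finset.mem_range] at hx
        rw [if_pos ⟨x.succ_pos, by omega⟩, one_div_mul_one_div]
        congr 1
        push_cast
        ring
      rw [Finset.sum_congr rfl hterm]
      simp only [Nat.lt_irrefl, false_and, if_false]
      rw [add_zero]
      congr 1
      rw [one_div_mul_one_div]
      congr 1
      push_cast
      ring
    rw [← hval]
    exact h

lemma z4_summable : Summable (fun n : ℕ => 1/(n:ℝ)^4) :=
  Real.summable_one_div_nat_pow.mpr (by norm_num)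

lemma c_summable : Summable (fun m : ℕ => d m + 1/(m:ℝ)^4) :=
  ((summable_prod_of_nonneg F_nonneg).mp F_summable).2.congr (fun m => (c_eq m).tsum_eq)

lemma d_nonneg (n : ℕ) : 0 ≤ d n := by
  apply tsum_nonneg
  intro m
  split <;> positivity

lemma d_summable : Summable d := by
  apply c_summable.of_nonneg_of_le d_nonneg
  intro m
  have : (0:ℝ) ≤ 1/(m:ℝ)^4 := by positivity
  linarith

lemma C_eq : ∑' p : ℕ × ℕ, F p = (∑' m : ℕ, d m) + π^4/90 := by
  rw [Summable.tsum_prod F_summable]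
  rw [tsum_congr (fun m => (c_eq m).tsum_eq)]
  rw [Summable.tsum_add d_summable z4_summable]
  congr 1
  exact hasSum_zeta_four.tsum_eq

lemma two_C : (∑' p : ℕ × ℕ, F p) + (∑' p : ℕ × ℕ, F p) = (π^2/6)^2 := by
  have hswap : Summable (fun p : ℕ × ℕ => F p.swap) :=
    ((Equiv.prodComm ℕ ℕ).summable_iff).mpr F_summable
  have h1 : ∑' p : ℕ × ℕ, F p.swap = ∑' p : ℕ × ℕ, F p := (Equiv.prodComm ℕ ℕ).tsum_eq F
  have h2 : ∑' p : ℕ × ℕ, (F p + F p.swap) = (∑' p : ℕ × ℕ, F p) + ∑' p : ℕ × ℕ, F p.swap :=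
    Summable.tsum_add F_summable hswap
  have h3 : ∀ p : ℕ × ℕ, F p + F p.swap = (1/(p.1:ℝ)^2)*(1/(p.2:ℝ)^2) := by
    rintro ⟨m, n⟩
    exact F_add_swap m n
  have h4 : ∑' p : ℕ × ℕ, (1/(p.1:ℝ)^2)*(1/(p.2:ℝ)^2) = (π^2/6)^2 := by
    rw [Summable.tsum_prod G_summable]
    have hm : ∀ m : ℕ, ∑' n : ℕ, (1/(m:ℝ)^2) * (1/(n:ℝ)^2) = (1/(m:ℝ)^2) * (π^2/6) := by
      intro m
      rw [tsum_mul_left, hasSum_zeta_two.tsum_eq]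
    rw [tsum_congr hm, tsum_mul_right, hasSum_zeta_two.tsum_eq]
    ring
  rw [h1] at h2
  rw [← h2, tsum_congr h3, h4]

theorem self_dual_eval : zetaD 3 1 = zetaS 4 / 4 := by
  have hD : zetaD 3 1 = ∑' n : ℕ, d n := by
    unfold zetaD d
    simp only [pow_one]
  have hS : zetaS 4 = π^4/90 := by
    unfold zetaS
    exact hasSum_zeta_four.tsum_eq
  have h1 := C_eq
  have h2 := two_C
  have h3 : (π^2/6)^2 = π^4/36 := by ring
  rw [hD, hS]
  linarith
end

section
/- ζ(4,1) = 2·ζ(5) - ζ(2)·ζ(3), where ζ(4,1) = ∑_{n>m≥1} 1/(n⁴m). -/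
open Finset ENNReal

noncomputable def Hh (k : ℕ) : ℝ := ∑ i ∈ Finset.range k, 1 / ((i : ℝ) + 1)


lemma summable_shift2 : Summable (fun m : ℕ => 1 / ((m : ℝ) + 1) ^ 2) := by
  have := (summable_nat_add_iff 1).mpr (Real.summable_one_div_nat_pow.mpr one_lt_two)
  refine this.congr fun m => ?_
  push_cast
  ring

lemma summable_tele (k : ℕ) :
    Summable (fun m : ℕ => 1 / (((m : ℝ) + 1) * ((m : ℝ) + k + 2))) := by
  refine Summable.of_nonneg_of_le (fun m => by positivity) (fun m => ?_) summable_shift2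
  have h2 : (m : ℝ) + 1 ≤ (m : ℝ) + k + 2 := by
    have : (0:ℝ) ≤ (k:ℝ) := by positivity
    linarith
  rw [div_le_div_iff₀ (by positivity) (by positivity)]
  nlinarith

lemma tele_partial (k : ℕ) : ∀ N : ℕ,
    ∑ m ∈ Finset.range N, 1 / (((m : ℝ) + 1) * ((m : ℝ) + k + 2))
      = (1 / ((k:ℝ) + 1)) * (Hh (k+1) - ∑ i ∈ Finset.range (k+1), 1 / ((N : ℝ) + i + 1)) := by
  intro N
  induction N with
  | zero =>
    simp only [Finset.sum_range_zero, Nat.cast_zero]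
    have : ∑ i ∈ Finset.range (k+1), 1 / ((0:ℝ) + (i:ℝ) + 1) = Hh (k+1) := by
      unfold Hh; apply Finset.sum_congr rfl; intro i _; norm_num
    rw [this]; ring
  | succ N ih =>
    rw [Finset.sum_range_succ, ih]
    set g : ℕ → ℝ := fun i => 1 / ((N:ℝ) + i + 1) with hg
    have e1 := Finset.sum_range_succ g (k+1)
    have e2 := Finset.sum_range_succ' g (k+1)
    have key : ∑ i ∈ Finset.range (k+1), g (i+1)
        = ∑ i ∈ Finset.range (k+1), g i + g (k+1) - g 0 := by
      rw [e1] at e2; linarith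
    have hshift : ∑ i ∈ Finset.range (k+1), 1 / (((N+1 : ℕ):ℝ) + i + 1)
        = ∑ i ∈ Finset.range (k+1), g i + g (k+1) - g 0 := by
      rw [← key]
      apply Finset.sum_congr rfl; intro i _
      simp only [hg]; push_cast; ring_nf
    rw [hshift]
    simp only [hg]
    have h1 : (0:ℝ) < (N:ℝ) + 1 := by positivity
    have h2 : (0:ℝ) < (N:ℝ) + (k:ℝ) + 2 := by positivity
    have h3 : (0:ℝ) < (k:ℝ) + 1 := by positivity
    push_cast
    field_simp
    ring

lemma tendsto_tail (k : ℕ) :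
    Filter.Tendsto (fun N : ℕ => ∑ i ∈ Finset.range (k+1), 1 / ((N : ℝ) + i + 1))
      Filter.atTop (nhds 0) := by
  have : (0:ℝ) = ∑ i ∈ Finset.range (k+1), (0:ℝ) := by simp
  rw [this]
  apply tendsto_finset_sum
  intro i _
  have hle : ∀ N : ℕ, 1 / ((N : ℝ) + i + 1) ≤ 1 / ((N:ℝ) + 1) := by
    intro N
    apply one_div_le_one_div_of_le (by positivity)
    have : (0:ℝ) ≤ (i:ℝ) := by positivity
    linarith
  have hge : ∀ N : ℕ, 0 ≤ 1 / ((N : ℝ) + i + 1) := fun N => by positivity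
  exact squeeze_zero hge hle tendsto_one_div_add_atTop_nhds_zero_nat

lemma tsum_tele (k : ℕ) :
    ∑' m : ℕ, 1 / (((m : ℝ) + 1) * ((m : ℝ) + k + 2)) = Hh (k+1) / ((k:ℝ)+1) := by
  have hs := summable_tele k
  have h1 := hs.hasSum.tendsto_sum_nat
  have h2 : Filter.Tendsto
      (fun N : ℕ => ∑ m ∈ Finset.range N, 1 / (((m : ℝ) + 1) * ((m : ℝ) + k + 2)))
      Filter.atTop (nhds (Hh (k+1) / ((k:ℝ)+1))) := by
    simp only [tele_partial k]
    have := ((tendsto_tail k).const_sub (Hh (k+1))).const_mul (1 / ((k:ℝ)+1))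
    simpa [sub_zero, one_div, div_eq_inv_mul] using this
  exact tendsto_nhds_unique h1 h2

noncomputable def EZ (s : ℕ) : ℝ≥0∞ := ∑' n : ℕ, ENNReal.ofReal (1 / ((n:ℝ)+1)^s)

noncomputable def ED (s t : ℕ) : ℝ≥0∞ :=
  ∑' p : ℕ × ℕ, ENNReal.ofReal (1 / (((p.2:ℝ) + (p.1:ℝ) + 2)^s * ((p.2:ℝ)+1)^t))

noncomputable def TT : ℝ≥0∞ :=
  ∑' p : ℕ × ℕ, ENNReal.ofReal
    (1 / (((p.2:ℝ)+1) * ((p.1:ℝ)+1) * ((p.2:ℝ)+(p.1:ℝ)+2)^3))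

noncomputable def AA : ℝ≥0∞ :=
  ∑' p : ℕ × ℕ, ENNReal.ofReal
    (1 / (((p.1:ℝ)+1)^2 * ((p.2:ℝ)+1) * ((p.2:ℝ)+(p.1:ℝ)+2)^2))

noncomputable def BB : ℝ≥0∞ :=
  ∑' p : ℕ × ℕ, ENNReal.ofReal
    (1 / (((p.1:ℝ)+1)^3 * ((p.2:ℝ)+1) * ((p.2:ℝ)+(p.1:ℝ)+2)))

/-- swap coordinates -/
lemma tsum_swap_nn (f : ℕ × ℕ → ℝ≥0∞) :
    ∑' p : ℕ × ℕ, f (p.2, p.1) = ∑' p : ℕ × ℕ, f p :=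
  (Equiv.prodComm ℕ ℕ).tsum_eq f

lemma tsum_inj_left (f : ℕ × ℕ → ℝ≥0∞) (h0 : ∀ q : ℕ × ℕ, ¬ q.2 < q.1 → f q = 0) :
    ∑' p : ℕ × ℕ, f (p.2 + p.1 + 1, p.2) = ∑' q, f q := by
  have hg : Function.Injective (fun p : ℕ × ℕ => (p.2 + p.1 + 1, p.2)) := by
    rintro ⟨a, b⟩ ⟨c, d⟩ h
    simp only [Prod.mk.injEq] at h
    exact Prod.ext (by omega) (by omega)
  refine hg.tsum_eq ?_
  intro q hq
  obtain ⟨a, b⟩ := q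
  have h2 : b < a := by by_contra h; exact hq (h0 (a, b) h)
  exact ⟨(a - b - 1, b), by simp only [Prod.mk.injEq, and_true, true_and]; omega⟩

lemma tsum_inj_right (f : ℕ × ℕ → ℝ≥0∞) (h0 : ∀ q : ℕ × ℕ, ¬ q.1 < q.2 → f q = 0) :
    ∑' p : ℕ × ℕ, f (p.2, p.2 + p.1 + 1) = ∑' q, f q := by
  have hg : Function.Injective (fun p : ℕ × ℕ => (p.2, p.2 + p.1 + 1)) := by
    rintro ⟨a, b⟩ ⟨c, d⟩ h
    simp only [Prod.mk.injEq] at h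
    exact Prod.ext (by omega) (by omega)
  refine hg.tsum_eq ?_
  intro q hq
  obtain ⟨a, b⟩ := q
  have h2 : a < b := by by_contra h; exact hq (h0 (a, b) h)
  exact ⟨(b - a - 1, a), by simp only [Prod.mk.injEq, and_true, true_and]; omega⟩

lemma tsum_inj_strict (f : ℕ × ℕ → ℝ≥0∞)
    (h0 : ∀ q : ℕ × ℕ, ¬ (0 < q.2 ∧ q.2 < q.1) → f q = 0) :
    ∑' p : ℕ × ℕ, f (p.2 + p.1 + 2, p.2 + 1) = ∑' q, f q := by
  have hg : Function.Injective (fun p : ℕ × ℕ => (p.2 + p.1 + 2, p.2 + 1)) := by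
    rintro ⟨a, b⟩ ⟨c, d⟩ h
    simp only [Prod.mk.injEq] at h
    exact Prod.ext (by omega) (by omega)
  refine hg.tsum_eq ?_
  intro q hq
  obtain ⟨a, b⟩ := q
  have h2 : 0 < b ∧ b < a := by by_contra h; exact hq (h0 (a, b) h)
  exact ⟨(a - b - 1, b - 1), by simp only [Prod.mk.injEq]; omega⟩

lemma swap_gen (s t : ℕ) :
    ∑' p : ℕ × ℕ, ENNReal.ofReal (1 / (((p.1:ℝ)+1)^t * ((p.2:ℝ)+(p.1:ℝ)+2)^s)) = ED s t := by
  rw [show ED s t = ∑' p : ℕ × ℕ,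
      (fun q : ℕ × ℕ => ENNReal.ofReal
        (1 / (((q.2:ℝ) + (q.1:ℝ) + 2)^s * ((q.2:ℝ)+1)^t))) p from rfl,
    ← tsum_swap_nn]
  apply tsum_congr
  intro p
  congr 1
  ring

lemma E4 : TT = ED 4 1 + ED 4 1 := by
  have h1 : ∀ p : ℕ × ℕ,
      ENNReal.ofReal (1 / (((p.2:ℝ)+1) * ((p.1:ℝ)+1) * ((p.2:ℝ)+(p.1:ℝ)+2)^3))
      = ENNReal.ofReal (1 / (((p.2:ℝ)+(p.1:ℝ)+2)^4 * ((p.2:ℝ)+1)^1))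
        + ENNReal.ofReal (1 / (((p.1:ℝ)+1)^1 * ((p.2:ℝ)+(p.1:ℝ)+2)^4)) := by
    intro p
    rw [← ENNReal.ofReal_add (by positivity) (by positivity)]
    congr 1
    have hx : (0:ℝ) < (p.2:ℝ)+1 := by positivity
    have hy : (0:ℝ) < (p.1:ℝ)+1 := by positivity
    have hs : (0:ℝ) < (p.2:ℝ)+(p.1:ℝ)+2 := by positivity
    field_simp
    ring
  unfold TT
  simp_rw [h1, ENNReal.tsum_add]
  congr 1
  exact swap_gen 4 1

lemma E1 : AA = TT + ED 3 2 := by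
  have h1 : ∀ p : ℕ × ℕ,
      ENNReal.ofReal (1 / (((p.1:ℝ)+1)^2 * ((p.2:ℝ)+1) * ((p.2:ℝ)+(p.1:ℝ)+2)^2))
      = ENNReal.ofReal (1 / (((p.2:ℝ)+1) * ((p.1:ℝ)+1) * ((p.2:ℝ)+(p.1:ℝ)+2)^3))
        + ENNReal.ofReal (1 / (((p.1:ℝ)+1)^2 * ((p.2:ℝ)+(p.1:ℝ)+2)^3)) := by
    intro p
    rw [← ENNReal.ofReal_add (by positivity) (by positivity)]
    congr 1
    have hx : (0:ℝ) < (p.2:ℝ)+1 := by positivity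
    have hy : (0:ℝ) < (p.1:ℝ)+1 := by positivity
    have hs : (0:ℝ) < (p.2:ℝ)+(p.1:ℝ)+2 := by positivity
    field_simp
    ring
  unfold AA
  simp_rw [h1, ENNReal.tsum_add]
  congr 1
  exact swap_gen 3 2

lemma E2 : BB = AA + ED 2 3 := by
  have h1 : ∀ p : ℕ × ℕ,
      ENNReal.ofReal (1 / (((p.1:ℝ)+1)^3 * ((p.2:ℝ)+1) * ((p.2:ℝ)+(p.1:ℝ)+2)))
      = ENNReal.ofReal (1 / (((p.1:ℝ)+1)^2 * ((p.2:ℝ)+1) * ((p.2:ℝ)+(p.1:ℝ)+2)^2))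
        + ENNReal.ofReal (1 / (((p.1:ℝ)+1)^3 * ((p.2:ℝ)+(p.1:ℝ)+2)^2)) := by
    intro p
    rw [← ENNReal.ofReal_add (by positivity) (by positivity)]
    congr 1
    have hx : (0:ℝ) < (p.2:ℝ)+1 := by positivity
    have hy : (0:ℝ) < (p.1:ℝ)+1 := by positivity
    have hs : (0:ℝ) < (p.2:ℝ)+(p.1:ℝ)+2 := by positivity
    field_simp
    ring
  unfold BB
  simp_rw [h1, ENNReal.tsum_add]
  congr 1
  exact swap_gen 2 3


lemma BB_eq : BB = ∑' k : ℕ, ENNReal.ofReal (Hh (k+1) / ((k:ℝ)+1)^4) := by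
  unfold BB
  rw [ENNReal.tsum_prod']
  apply tsum_congr
  intro k
  have hsplit : ∀ m : ℕ,
      (1:ℝ) / (((k:ℝ)+1)^3 * ((m:ℝ)+1) * ((m:ℝ)+(k:ℝ)+2))
      = (1 / ((k:ℝ)+1)^3) * (1 / (((m:ℝ)+1) * ((m:ℝ)+(k:ℝ)+2))) := by
    intro m
    rw [div_mul_div_comm, one_mul, mul_assoc]
  simp_rw [hsplit, ENNReal.ofReal_mul (by positivity : (0:ℝ) ≤ 1 / ((k:ℝ)+1)^3),
    ENNReal.tsum_mul_left]
  rw [← ENNReal.ofReal_tsum_of_nonneg (fun m => by positivity) (summable_tele k)]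
  rw [tsum_tele k, ← ENNReal.ofReal_mul (by positivity)]
  congr 1
  rw [div_mul_div_comm, one_mul]
  congr 1

lemma E3 : BB = ED 4 1 + EZ 5 := by
  rw [BB_eq]
  have step1 : ∀ k : ℕ, ENNReal.ofReal (Hh (k+1) / ((k:ℝ)+1)^4)
      = ∑' i : ℕ, (if i < k+1 then
          ENNReal.ofReal (1 / (((i:ℝ)+1) * ((k:ℝ)+1)^4)) else 0) := by
    intro k
    rw [tsum_eq_sum (s := Finset.range (k+1))
      (by intro i hi; rw [if_neg]; simpa using hi)]
    rw [Finset.sum_congr rfl (fun i hi => if_pos (Finset.mem_range.mp hi))]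
    rw [← ENNReal.ofReal_sum_of_nonneg (fun i _ => by positivity)]
    congr 1
    unfold Hh
    rw [Finset.sum_div]
    apply Finset.sum_congr rfl
    intro i _
    rw [div_div]
  simp_rw [step1]
  rw [show (∑' (k : ℕ) (i : ℕ), if i < k + 1 then
        ENNReal.ofReal (1 / (((i:ℝ)+1) * ((k:ℝ)+1)^4)) else 0)
      = ∑' q : ℕ × ℕ, (if q.2 < q.1 + 1 then
        ENNReal.ofReal (1 / (((q.2:ℝ)+1) * ((q.1:ℝ)+1)^4)) else 0) from
    (ENNReal.tsum_prod' (f := fun q : ℕ × ℕ => if q.2 < q.1 + 1 then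
        ENNReal.ofReal (1 / (((q.2:ℝ)+1) * ((q.1:ℝ)+1)^4)) else 0)).symm]
  have hsplit : ∀ q : ℕ × ℕ,
      (if q.2 < q.1 + 1 then ENNReal.ofReal (1 / (((q.2:ℝ)+1) * ((q.1:ℝ)+1)^4)) else 0)
      = (if q.2 < q.1 then ENNReal.ofReal (1 / (((q.2:ℝ)+1) * ((q.1:ℝ)+1)^4)) else 0)
        + (if q.2 = q.1 then ENNReal.ofReal (1 / (((q.2:ℝ)+1) * ((q.1:ℝ)+1)^4)) else 0) := by
    intro q
    rcases lt_trichotomy q.2 q.1 with h | h | h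
    · rw [if_pos (by omega), if_pos h, if_neg (by omega), add_zero]
    · rw [if_pos (by omega), if_neg (by omega), if_pos h, zero_add]
    · rw [if_neg (by omega), if_neg (by omega), if_neg (by omega), add_zero]
  simp_rw [hsplit, ENNReal.tsum_add]
  congr 1
  · -- lt part = ED 4 1
    rw [← tsum_inj_left
      (fun q => if q.2 < q.1 then ENNReal.ofReal (1 / (((q.2:ℝ)+1) * ((q.1:ℝ)+1)^4)) else 0)
      (fun q hq => if_neg hq)]
    unfold ED
    apply tsum_congr
    intro p
    show (if p.2 < p.2 + p.1 + 1 then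
        ENNReal.ofReal (1 / ((((p.2 : ℕ):ℝ)+1) * (((p.2 + p.1 + 1 : ℕ):ℝ)+1)^4)) else 0) = _
    rw [if_pos (by omega)]
    congr 1
    have h1 : ((p.2:ℝ)+1) ≠ 0 := by positivity
    have h2 : ((p.2:ℝ)+(p.1:ℝ)+2) ≠ 0 := by positivity
    push_cast
    field_simp
    ring
  · -- diagonal = EZ 5
    rw [ENNReal.tsum_prod']
    unfold EZ
    apply tsum_congr
    intro k
    trans (∑' b : ℕ, (if b = k then ENNReal.ofReal (1 / (((k:ℝ)+1) * ((k:ℝ)+1)^4)) else 0))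
    · apply tsum_congr
      intro b
      by_cases h : b = k
      · subst h; simp
      · have h2 : (k, b).2 ≠ (k, b).1 := h
        rw [if_neg h2, if_neg h]
    · rw [tsum_ite_eq]
      congr 1
      congr 1
      ring

lemma E5 : EZ 2 * EZ 3 = ED 3 2 + ED 2 3 + EZ 5 := by
  have hprod : EZ 2 * EZ 3
      = ∑' q : ℕ × ℕ, ENNReal.ofReal (1 / (((q.1:ℝ)+1)^2 * ((q.2:ℝ)+1)^3)) := by
    unfold EZ
    rw [← ENNReal.tsum_mul_right]
    rw [show (∑' q : ℕ × ℕ, ENNReal.ofReal (1 / (((q.1:ℝ)+1)^2 * ((q.2:ℝ)+1)^3)))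
        = ∑' (a : ℕ) (b : ℕ), ENNReal.ofReal (1 / (((a:ℝ)+1)^2 * ((b:ℝ)+1)^3)) from
      ENNReal.tsum_prod' (f := fun q : ℕ × ℕ =>
        ENNReal.ofReal (1 / (((q.1:ℝ)+1)^2 * ((q.2:ℝ)+1)^3)))]
    apply tsum_congr
    intro a
    rw [← ENNReal.tsum_mul_left]
    apply tsum_congr
    intro b
    rw [← ENNReal.ofReal_mul (by positivity)]
    congr 1
    rw [div_mul_div_comm, one_mul]
  rw [hprod]
  have hsplit : ∀ q : ℕ × ℕ,
      ENNReal.ofReal (1 / (((q.1:ℝ)+1)^2 * ((q.2:ℝ)+1)^3))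
      = (if q.1 < q.2 then ENNReal.ofReal (1 / (((q.1:ℝ)+1)^2 * ((q.2:ℝ)+1)^3)) else 0)
        + (if q.2 < q.1 then ENNReal.ofReal (1 / (((q.1:ℝ)+1)^2 * ((q.2:ℝ)+1)^3)) else 0)
        + (if q.2 = q.1 then ENNReal.ofReal (1 / (((q.1:ℝ)+1)^2 * ((q.2:ℝ)+1)^3)) else 0) := by
    intro q
    rcases lt_trichotomy q.1 q.2 with h | h | h
    · rw [if_pos h, if_neg (by omega), if_neg (by omega), add_zero, add_zero]
    · rw [if_neg (by omega), if_neg (by omega), if_pos (by omega), zero_add, zero_add]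
    · rw [if_neg (by omega), if_pos h, if_neg (by omega), zero_add, add_zero]
  rw [tsum_congr hsplit, ENNReal.tsum_add, ENNReal.tsum_add]
  congr 1
  congr 1
  · -- q.1 < q.2 part = ED 3 2
    rw [← tsum_inj_right
      (fun q => if q.1 < q.2 then ENNReal.ofReal (1 / (((q.1:ℝ)+1)^2 * ((q.2:ℝ)+1)^3)) else 0)
      (fun q hq => if_neg hq)]
    unfold ED
    apply tsum_congr
    intro p
    show (if p.2 < p.2 + p.1 + 1 then
        ENNReal.ofReal (1 / ((((p.2:ℕ):ℝ)+1)^2 * (((p.2 + p.1 + 1 : ℕ):ℝ)+1)^3)) else 0) = _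
    rw [if_pos (by omega)]
    congr 1
    push_cast
    ring_nf
  · -- q.2 < q.1 part = ED 2 3
    rw [← tsum_inj_left
      (fun q => if q.2 < q.1 then ENNReal.ofReal (1 / (((q.1:ℝ)+1)^2 * ((q.2:ℝ)+1)^3)) else 0)
      (fun q hq => if_neg hq)]
    unfold ED
    apply tsum_congr
    intro p
    show (if p.2 < p.2 + p.1 + 1 then
        ENNReal.ofReal (1 / ((((p.2 + p.1 + 1 : ℕ):ℝ)+1)^2 * (((p.2:ℕ):ℝ)+1)^3)) else 0) = _
    rw [if_pos (by omega)]
    congr 1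
    push_cast
    ring_nf
  · -- diagonal = EZ 5
    rw [show (∑' q : ℕ × ℕ, (if q.2 = q.1 then
          ENNReal.ofReal (1 / (((q.1:ℝ)+1)^2 * ((q.2:ℝ)+1)^3)) else 0))
        = ∑' (a : ℕ) (b : ℕ), (if b = a then
          ENNReal.ofReal (1 / (((a:ℝ)+1)^2 * ((b:ℝ)+1)^3)) else 0) from
      ENNReal.tsum_prod' (f := fun q : ℕ × ℕ => if q.2 = q.1 then
          ENNReal.ofReal (1 / (((q.1:ℝ)+1)^2 * ((q.2:ℝ)+1)^3)) else 0)]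
    unfold EZ
    apply tsum_congr
    intro a
    trans (∑' b : ℕ, (if b = a then ENNReal.ofReal (1 / (((a:ℝ)+1)^2 * ((a:ℝ)+1)^3)) else 0))
    · apply tsum_congr
      intro b
      by_cases h : b = a
      · subst h; rfl
      · rw [if_neg h, if_neg h]
    · rw [tsum_ite_eq]
      congr 1
      congr 1
      ring


lemma summable_sh (s : ℕ) (hs : 1 < s) : Summable (fun n : ℕ => 1 / ((n:ℝ)+1)^s) := by
  have := (summable_nat_add_iff 1).mpr (Real.summable_one_div_nat_pow.mpr hs)
  refine this.congr fun m => ?_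
  push_cast
  ring

lemma EZ_eq (s : ℕ) (hs : 1 < s) :
    EZ s = ENNReal.ofReal (∑' n : ℕ, 1 / ((n:ℝ)+1)^s) :=
  (ENNReal.ofReal_tsum_of_nonneg (fun n => by positivity) (summable_sh s hs)).symm

lemma EZ_ne_top (s : ℕ) (hs : 1 < s) : EZ s ≠ ⊤ := by
  rw [EZ_eq s hs]; exact ENNReal.ofReal_ne_top

lemma zetaS_eq (s : ℕ) (hs : 1 < s) : zetaS s = (EZ s).toReal := by
  rw [EZ_eq s hs, ENNReal.toReal_ofReal (tsum_nonneg fun n => by positivity)]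
  unfold zetaS
  rw [Summable.tsum_eq_zero_add (Real.summable_one_div_nat_pow.mpr hs)]
  rw [show (1 : ℝ) / ((0:ℕ):ℝ)^s = 0 by
    simp [zero_pow (show s ≠ 0 by omega)]]
  rw [zero_add]
  apply tsum_congr
  intro n
  push_cast
  ring_nf

lemma Hh_nonneg (k : ℕ) : 0 ≤ Hh k := Finset.sum_nonneg fun i _ => by positivity

lemma Hh_le (k : ℕ) : Hh k ≤ k := by
  unfold Hh
  calc ∑ i ∈ Finset.range k, 1/((i:ℝ)+1) ≤ ∑ i ∈ Finset.range k, (1:ℝ) :=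
        Finset.sum_le_sum fun i _ => by
          rw [div_le_one (by positivity)]
          have : (0:ℝ) ≤ (i:ℝ) := Nat.cast_nonneg i
          linarith
  _ = k := by simp

lemma BB_le : BB ≤ EZ 3 := by
  rw [BB_eq]; unfold EZ
  apply ENNReal.tsum_le_tsum
  intro k
  apply ENNReal.ofReal_le_ofReal
  rw [div_le_div_iff₀ (by positivity) (by positivity)]
  have h1 := Hh_le (k+1)
  have h2 := Hh_nonneg (k+1)
  push_cast at h1
  have h3 : (0:ℝ) < ((k:ℝ)+1)^3 := by positivity
  nlinarith

noncomputable def FR : ℕ × ℕ → ℝ := fun p =>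
  if 0 < p.2 ∧ p.2 < p.1 then 1 / ((p.1:ℝ)^4 * (p.2:ℝ)^1) else 0

lemma FR_nonneg : ∀ p, 0 ≤ FR p := by
  intro p; unfold FR; split
  · positivity
  · exact le_refl 0

lemma FR_sum : ∑' p : ℕ × ℕ, ENNReal.ofReal (FR p) = ED 4 1 := by
  rw [← tsum_inj_strict (fun q => ENNReal.ofReal (FR q))
      (fun q hq => by simp only [FR, if_neg hq]; exact ENNReal.ofReal_zero)]
  unfold ED
  apply tsum_congr
  intro p
  show ENNReal.ofReal (FR (p.2 + p.1 + 2, p.2 + 1)) = _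
  unfold FR
  rw [if_pos (by refine ⟨by omega, by omega⟩)]
  congr 1
  push_cast
  ring_nf

lemma zetaD_eq (h : ED 4 1 ≠ ⊤) : zetaD 4 1 = (ED 4 1).toReal := by
  have hiter : (∑' p : ℕ × ℕ, ENNReal.ofReal (FR p))
      = ∑' (n : ℕ) (m : ℕ), ENNReal.ofReal (FR (n, m)) :=
    ENNReal.tsum_prod' (f := fun p => ENNReal.ofReal (FR p))
  have hne : (∑' (n : ℕ) (m : ℕ), ENNReal.ofReal (FR (n, m))) ≠ ⊤ := by
    rw [← hiter, FR_sum]; exact h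
  have hfin : ∀ n : ℕ, (∑' m : ℕ, ENNReal.ofReal (FR (n, m))) ≠ ⊤ := by
    intro n
    exact ne_top_of_le_ne_top hne
      (ENNReal.le_tsum (f := fun n => ∑' m : ℕ, ENNReal.ofReal (FR (n, m))) n)
  have hsumm : ∀ n : ℕ, Summable (fun m => FR (n, m)) := by
    intro n
    apply summable_of_ne_finset_zero (s := Finset.range n)
    intro m hm
    simp only [Finset.mem_range] at hm
    simp only [FR]
    rw [if_neg (by push_neg; intro _; omega)]
  have hinner : ∀ n : ℕ, (∑' m : ℕ, ENNReal.ofReal (FR (n, m))).toReal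
      = ∑' m : ℕ, FR (n, m) := by
    intro n
    rw [← ENNReal.ofReal_tsum_of_nonneg (fun m => FR_nonneg _) (hsumm n),
      ENNReal.toReal_ofReal (tsum_nonneg fun m => FR_nonneg _)]
  have h1 : (ED 4 1).toReal = ∑' n : ℕ, (∑' m : ℕ, ENNReal.ofReal (FR (n, m))).toReal := by
    rw [← FR_sum, hiter, ENNReal.tsum_toReal_eq hfin]
  rw [h1]
  unfold zetaD
  apply tsum_congr
  intro n
  rw [hinner n]
  exact tsum_congr fun m => rfl

theorem zeta_4_1 : zetaD 4 1 = 2 * zetaS 5 - zetaS 2 * zetaS 3 := by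
  have hZ2 := EZ_ne_top 2 (by norm_num)
  have hZ3 := EZ_ne_top 3 (by norm_num)
  have hZ5 := EZ_ne_top 5 (by norm_num)
  have hBB : BB ≠ ⊤ := ne_top_of_le_ne_top hZ3 BB_le
  have hED41 : ED 4 1 ≠ ⊤ := ne_top_of_le_ne_top hBB (by rw [E3]; exact le_self_add)
  have k0 : ED 4 1 + (ED 4 1 + ED 3 2 + ED 2 3) = ED 4 1 + EZ 5 := by
    rw [← E3, E2, E1, E4]; ring
  have k1 : ED 4 1 + ED 3 2 + ED 2 3 = EZ 5 := (ENNReal.add_right_inj hED41).mp k0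
  have k2 : ED 4 1 + EZ 2 * EZ 3 = EZ 5 + EZ 5 := by
    rw [E5, ← k1]; ring
  have k3 := congrArg ENNReal.toReal k2
  rw [ENNReal.toReal_add hED41 (ENNReal.mul_ne_top hZ2 hZ3), ENNReal.toReal_mul,
      ENNReal.toReal_add hZ5 hZ5] at k3
  rw [zetaD_eq hED41, zetaS_eq 5 (by norm_num), zetaS_eq 2 (by norm_num),
      zetaS_eq 3 (by norm_num)]
  linarith
end

section
/- ζ(3,2) = 3·ζ(2)·ζ(3) - (11/2)·ζ(5). -/
open Finset Filter Topology Function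
open scoped NNReal ENNReal

lemma Antitone.hasSum_sub_comp_add {f : ℕ → ℝ} (hanti : Antitone f)
    (hf : Tendsto f atTop (𝓝 0)) (k : ℕ) :
    HasSum (fun n => f n - f (n + k)) (∑ i ∈ range k, f i) := by
  rw [hasSum_iff_tendsto_nat_of_nonneg fun n => sub_nonneg.2 (hanti (Nat.le_add_right n k))]
  have hpartial : ∀ N, ∑ n ∈ range N, (f n - f (n + k))
      = ∑ i ∈ range k, f i - ∑ i ∈ range k, f (N + i) := by
    intro N
    have h₁ := sum_range_add f N k
    have h₂ := sum_range_add f k N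
    simp only [add_comm k] at h₂
    rw [sum_sub_distrib]
    linarith
  have htail : Tendsto (fun N => ∑ i ∈ range k, f (N + i)) atTop (𝓝 0) := by
    simpa using tendsto_finsetSum (range k) fun i _ => hf.comp (tendsto_add_atTop_nat i)
  simpa [hpartial] using tendsto_const_nhds.sub htail

lemma Function.Injective.tsum_comp_eq_tsum_indicator {M α β : Type*} [AddCommMonoid M]
    [TopologicalSpace M] {g : α → β} (hg : Injective g) (f : β → M) :
    ∑' a, f (g a) = ∑' b, (Set.range g).indicator f b := by
  rw [← tsum_range f hg, _root_.tsum_subtype]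

lemma Nat.range_add_add_one_fst :
    Set.range (fun p : ℕ × ℕ => (p.1 + p.2 + 1, p.2)) = {q | q.2 < q.1} := by
  ext ⟨n, m⟩
  simp only [Set.mem_range, Prod.exists, Prod.mk.injEq, Set.mem_ofPred_eq]
  exact ⟨by omega, fun h => ⟨n - m - 1, m, by omega, rfl⟩⟩

lemma Nat.range_add_add_one_snd :
    Set.range (fun p : ℕ × ℕ => (p.2, p.1 + p.2 + 1)) = {q | q.1 < q.2} := by
  ext ⟨n, m⟩
  simp only [Set.mem_range, Prod.exists, Prod.mk.injEq, Set.mem_ofPred_eq]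
  exact ⟨by omega, fun h => ⟨m - n - 1, n, rfl, by omega⟩⟩

namespace ENNReal

lemma tsum_mul_tsum {α β : Type*} (f : α → ℝ≥0∞) (g : β → ℝ≥0∞) :
    (∑' a, f a) * ∑' b, g b = ∑' p : α × β, f p.1 * g p.2 := by
  rw [ENNReal.tsum_prod', ← ENNReal.tsum_mul_right]
  simp_rw [ENNReal.tsum_mul_left]

lemma tsum_prod_nat_eq_lower_add_upper_add_diag (F : ℕ × ℕ → ℝ≥0∞) :
    ∑' p, F p = ∑' p : ℕ × ℕ, F (p.1 + p.2 + 1, p.2) + ∑' p : ℕ × ℕ, F (p.2, p.1 + p.2 + 1)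
      + ∑' n, F (n, n) := by
  have hlower : Injective fun p : ℕ × ℕ => (p.1 + p.2 + 1, p.2) := by
    intro p q h
    simp only [Prod.mk.injEq] at h
    ext <;> omega
  have hupper : Injective fun p : ℕ × ℕ => (p.2, p.1 + p.2 + 1) := by
    intro p q h
    simp only [Prod.mk.injEq] at h
    ext <;> omega
  have hdiag : ∑' n, F (n, n) = ∑' q, (Set.diagonal ℕ).indicator F q := by
    rw [← Set.range_diag]
    exact Injective.tsum_comp_eq_tsum_indicator (fun _ _ h => congrArg Prod.fst h) F
  rw [hlower.tsum_comp_eq_tsum_indicator, hupper.tsum_comp_eq_tsum_indicator, hdiag,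
    Nat.range_add_add_one_fst, Nat.range_add_add_one_snd, ← ENNReal.tsum_add, ← ENNReal.tsum_add]
  refine tsum_congr fun ⟨n, m⟩ => ?_
  simp only [Set.indicator, Set.mem_ofPred_eq, Set.mem_diagonal_iff]
  rcases lt_trichotomy m n with h | rfl | h
  · simp [h, h.not_gt, h.ne']
  · simp
  · simp [h, h.not_gt, h.ne]

lemma toReal_tsum_coe {α : Type*} (f : α → ℝ≥0) :
    (∑' a, (f a : ℝ≥0∞)).toReal = ∑' a, (f a : ℝ) := by
  rw [ENNReal.tsum_toReal_eq fun _ => ENNReal.coe_ne_top]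
  rfl

lemma toReal_add_add {a b c : ℝ≥0∞} (h : a + b + c ≠ ∞) :
    (a + b + c).toReal = a.toReal + b.toReal + c.toReal := by
  simp only [ENNReal.add_ne_top] at h
  rw [ENNReal.toReal_add (ENNReal.add_ne_top.2 h.1) h.2, ENNReal.toReal_add h.1.1 h.1.2]

end ENNReal

namespace MultipleZeta

noncomputable def ennZeta (s : ℕ) : ℝ≥0∞ := ∑' n : ℕ, ((1 / ((n : ℝ≥0) + 1) ^ s : ℝ≥0) : ℝ≥0∞)

noncomputable def doubleTerm (s t : ℕ) (x y : ℝ≥0) : ℝ≥0 := 1 / ((x + y) ^ s * y ^ t)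

/-- The pairs `n > m ≥ 1` are parametrized as `(n, m) = (x + y, y)` with `x, y ≥ 1`. -/
noncomputable def ennDoubleZeta (s t : ℕ) : ℝ≥0∞ :=
  ∑' p : ℕ × ℕ, (doubleTerm s t (p.1 + 1) (p.2 + 1) : ℝ≥0∞)

lemma tsum_doubleTerm_swap (s t : ℕ) :
    ∑' p : ℕ × ℕ, (doubleTerm s t (p.2 + 1) (p.1 + 1) : ℝ≥0∞) = ennDoubleZeta s t :=
  (Equiv.prodComm ℕ ℕ).tsum_eq fun p => (doubleTerm s t (p.1 + 1) (p.2 + 1) : ℝ≥0∞)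

lemma ennZeta_ne_top {s : ℕ} (hs : 2 ≤ s) : ennZeta s ≠ ∞ := by
  refine ENNReal.tsum_coe_ne_top_iff_summable.2 (NNReal.summable_coe.1 ?_)
  have h := (summable_nat_add_iff 1).2 (Real.summable_one_div_nat_pow.2 hs)
  push_cast at h ⊢
  exact h

theorem ennZeta_mul_ennZeta (s t : ℕ) :
    ennZeta s * ennZeta t = ennDoubleZeta s t + ennDoubleZeta t s + ennZeta (s + t) := by
  rw [ennZeta, ennZeta, ENNReal.tsum_mul_tsum, ENNReal.tsum_prod_nat_eq_lower_add_upper_add_diag,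
    ennZeta, ennDoubleZeta, ennDoubleZeta]
  simp_rw [← ENNReal.coe_mul, one_div_mul_one_div, doubleTerm, ← pow_add]
  congr 2 <;> refine tsum_congr fun p => congrArg _ ?_ <;> push_cast <;> ring

lemma one_div_sq_mul_cube_eq {x y : ℝ≥0} (hx : x ≠ 0) (hy : y ≠ 0) :
    1 / (x ^ 2 * y ^ 3) = doubleTerm 2 3 x y + doubleTerm 3 2 y x + 2 * doubleTerm 3 2 x y
      + 3 * doubleTerm 4 1 y x + 3 * doubleTerm 4 1 x y := by
  simp only [doubleTerm]
  field_simp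
  ring

theorem ennZeta_two_mul_ennZeta_three :
    ennZeta 2 * ennZeta 3
      = ennDoubleZeta 2 3 + 3 * ennDoubleZeta 3 2 + 6 * ennDoubleZeta 4 1 := by
  rw [ennZeta, ennZeta, ENNReal.tsum_mul_tsum]
  simp only [← ENNReal.coe_mul, one_div_mul_one_div,
    one_div_sq_mul_cube_eq (Nat.cast_add_one_ne_zero _) (Nat.cast_add_one_ne_zero _)]
  push_cast
  simp only [ENNReal.tsum_add, ENNReal.tsum_mul_left, tsum_doubleTerm_swap,
    ← ennDoubleZeta.eq_1]
  ring

lemma ennDoubleZeta_four_one_ne_top : ennDoubleZeta 4 1 ≠ ∞ := by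
  have h : ennZeta 2 * ennZeta 3 ≠ ∞ :=
    ENNReal.mul_ne_top (ennZeta_ne_top le_rfl) (ennZeta_ne_top (by norm_num))
  rw [ennZeta_two_mul_ennZeta_three] at h
  exact (ENNReal.lt_top_of_mul_ne_top_right (ne_top_of_le_ne_top h le_add_self)
    (by norm_num)).ne

/-- The value is `H_{k+1} / (k + 1)`, with `H` the harmonic numbers. -/
lemma hasSum_one_div_mul_add_succ (k : ℕ) :
    HasSum (fun n : ℕ => 1 / (((n : ℝ≥0) + 1) * ((n + 1) + (k + 1))))
      ((∑ i ∈ range (k + 1), 1 / ((i : ℝ≥0) + 1)) / (k + 1)) := by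
  have hanti : Antitone fun n : ℕ => 1 / ((n : ℝ) + 1) := fun a b hab => by
    dsimp only
    gcongr
  have h := (hanti.hasSum_sub_comp_add tendsto_one_div_add_atTop_nhds_zero_nat (k + 1)).div_const
    ((k : ℝ) + 1)
  rw [← NNReal.hasSum_coe]
  push_cast
  refine h.congr_fun fun n => ?_
  push_cast
  field_simp
  ring

lemma tsum_one_div_mul_add_mul_cube :
    ∑' p : ℕ × ℕ,
        ((1 / (((p.1 : ℝ≥0) + 1) * ((p.1 + 1) + (p.2 + 1)) * (p.2 + 1) ^ 3) : ℝ≥0) : ℝ≥0∞)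
      = ∑' k : ℕ,
        (((∑ i ∈ range (k + 1), 1 / ((i : ℝ≥0) + 1)) / ((k : ℝ≥0) + 1) ^ 4 : ℝ≥0) : ℝ≥0∞) := by
  rw [ENNReal.tsum_prod', ENNReal.tsum_comm]
  refine tsum_congr fun k => ?_
  have hsplit : ∀ n : ℕ, (1 / (((n : ℝ≥0) + 1) * ((n + 1) + (k + 1)) * (k + 1) ^ 3) : ℝ≥0)
      = 1 / ((k : ℝ≥0) + 1) ^ 3 * (1 / (((n : ℝ≥0) + 1) * ((n + 1) + (k + 1)))) := by
    intro n
    rw [one_div_mul_one_div, mul_comm]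
  simp_rw [hsplit, ENNReal.coe_mul, ENNReal.tsum_mul_left,
    (ENNReal.hasSum_coe.2 (hasSum_one_div_mul_add_succ k)).tsum_eq, ← ENNReal.coe_mul]
  congr 1
  field_simp

lemma tsum_harmonic_div_pow_four :
    ∑' k : ℕ,
        (((∑ i ∈ range (k + 1), 1 / ((i : ℝ≥0) + 1)) / ((k : ℝ≥0) + 1) ^ 4 : ℝ≥0) : ℝ≥0∞)
      = ennDoubleZeta 4 1 + ennZeta 5 := by
  have hrow : ∀ k : ℕ,
      (((∑ i ∈ range (k + 1), 1 / ((i : ℝ≥0) + 1)) / ((k : ℝ≥0) + 1) ^ 4 : ℝ≥0) : ℝ≥0∞)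
        = ∑' i : ℕ, if i ≤ k then ((1 / (((k : ℝ≥0) + 1) ^ 4 * ((i : ℝ≥0) + 1)) : ℝ≥0) : ℝ≥0∞)
          else 0 := by
    intro k
    rw [tsum_eq_sum (s := range (k + 1)) fun i hi => if_neg (by simpa [Nat.lt_succ_iff] using hi),
      sum_div, ENNReal.ofNNReal_finsetSum]
    refine sum_congr rfl fun i hi => ?_
    rw [if_pos (Nat.lt_succ_iff.1 (mem_range.1 hi)), div_div, mul_comm]
  simp_rw [hrow]
  rw [← ENNReal.tsum_prod' (f := fun p : ℕ × ℕ => if p.2 ≤ p.1 then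
      ((1 / (((p.1 : ℝ≥0) + 1) ^ 4 * ((p.2 : ℝ≥0) + 1)) : ℝ≥0) : ℝ≥0∞) else 0),
    ENNReal.tsum_prod_nat_eq_lower_add_upper_add_diag, ennDoubleZeta, ennZeta]
  have hlower : ∀ p : ℕ × ℕ, p.2 ≤ p.1 + p.2 + 1 := fun p => by omega
  have hupper : ∀ p : ℕ × ℕ, ¬ p.1 + p.2 + 1 ≤ p.2 := fun p => by omega
  simp only [hlower, hupper, le_refl, if_true, if_false, tsum_zero, add_zero]
  congr 1
  refine tsum_congr fun p => congrArg _ ?_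
  simp only [doubleTerm]
  push_cast
  ring

lemma one_div_mul_add_mul_cube_eq {x y : ℝ≥0} (hx : x ≠ 0) (hy : y ≠ 0) :
    1 / (x * (x + y) * y ^ 3) = doubleTerm 2 3 x y + doubleTerm 3 2 x y + doubleTerm 4 1 x y
      + doubleTerm 4 1 y x := by
  simp only [doubleTerm]
  field_simp
  ring

theorem ennDoubleZeta_add_add_eq_ennZeta_five :
    ennDoubleZeta 2 3 + ennDoubleZeta 3 2 + ennDoubleZeta 4 1 = ennZeta 5 := by
  have h := tsum_one_div_mul_add_mul_cube.trans tsum_harmonic_div_pow_four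
  simp only [one_div_mul_add_mul_cube_eq (Nat.cast_add_one_ne_zero _) (Nat.cast_add_one_ne_zero _),
    ENNReal.coe_add, ENNReal.tsum_add, tsum_doubleTerm_swap, ← ennDoubleZeta.eq_1] at h
  rw [add_comm (ennDoubleZeta 4 1)] at h
  exact (ENNReal.add_left_inj ennDoubleZeta_four_one_ne_top).1 h

lemma zetaS_eq_toReal {s : ℕ} (hs : s ≠ 0) : zetaS s = (ennZeta s).toReal := by
  have h : zetaS s = (∑' n : ℕ, ((1 / (n : ℝ≥0) ^ s : ℝ≥0) : ℝ≥0∞)).toReal := by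
    rw [ENNReal.toReal_tsum_coe, zetaS]
    push_cast
    rfl
  rw [h, tsum_eq_zero_add' ENNReal.summable, ennZeta]
  simp [hs]

lemma zetaD_eq_toReal (s t : ℕ) : zetaD s t = (ennDoubleZeta s t).toReal := by
  set q : ℕ → ℕ → ℝ≥0 := fun n m => if 0 < m ∧ m < n then 1 / ((n : ℝ≥0) ^ s * (m : ℝ≥0) ^ t)
    else 0 with hq
  have hrow : ∀ n, Summable (q n) := fun n =>
    summable_of_ne_finset_zero (s := range n) fun m hm => if_neg (by simp at hm; omega)
  have hreal : zetaD s t = ∑' n, ∑' m, (q n m : ℝ) := by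
    refine tsum_congr fun n => tsum_congr fun m => ?_
    simp only [hq]
    split_ifs <;> simp
  have hiter : (∑' n, ∑' m, (q n m : ℝ≥0∞)).toReal = ∑' n, ∑' m, (q n m : ℝ) := by
    rw [ENNReal.tsum_toReal_eq fun n => ENNReal.coe_tsum (hrow n) ▸ ENNReal.coe_ne_top]
    refine tsum_congr fun n => ?_
    rw [← ENNReal.coe_tsum (hrow n), ENNReal.coe_toReal, NNReal.coe_tsum]
  have hinj : Injective fun p : ℕ × ℕ => (p.1 + p.2 + 2, p.2 + 1) := by
    intro p p' h
    simp only [Prod.mk.injEq] at h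
    ext <;> omega
  have hsupp : support (fun p : ℕ × ℕ => (q p.1 p.2 : ℝ≥0∞))
      ⊆ Set.range fun p : ℕ × ℕ => (p.1 + p.2 + 2, p.2 + 1) := by
    rintro ⟨n, m⟩ h
    have hnm : 0 < m ∧ m < n := by
      by_contra hnm
      exact h (by simp [hq, hnm])
    exact ⟨(n - m - 1, m - 1), by simp only [Prod.mk.injEq]; omega⟩
  rw [hreal, ← hiter, ← ENNReal.tsum_prod' (f := fun p : ℕ × ℕ => (q p.1 p.2 : ℝ≥0∞)),
    ← hinj.tsum_eq hsupp, ennDoubleZeta]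
  refine congrArg _ (tsum_congr fun p => congrArg _ ?_)
  simp only [hq, doubleTerm, if_pos (show 0 < p.2 + 1 ∧ p.2 + 1 < p.1 + p.2 + 2 by omega)]
  push_cast
  ring

theorem zetaS_mul_zetaS {s t : ℕ} (hs : 2 ≤ s) (ht : 2 ≤ t) :
    zetaS s * zetaS t = zetaD s t + zetaD t s + zetaS (s + t) := by
  have hfin := ENNReal.mul_ne_top (ennZeta_ne_top hs) (ennZeta_ne_top ht)
  rw [ennZeta_mul_ennZeta] at hfin
  rw [zetaS_eq_toReal (by omega), zetaS_eq_toReal (by omega), zetaS_eq_toReal (by omega),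
    zetaD_eq_toReal, zetaD_eq_toReal, ← ENNReal.toReal_mul, ennZeta_mul_ennZeta,
    ENNReal.toReal_add_add hfin]

theorem zetaS_two_mul_zetaS_three :
    zetaS 2 * zetaS 3 = zetaD 2 3 + 3 * zetaD 3 2 + 6 * zetaD 4 1 := by
  have hfin := ENNReal.mul_ne_top (ennZeta_ne_top le_rfl) (ennZeta_ne_top (s := 3) (by norm_num))
  rw [ennZeta_two_mul_ennZeta_three] at hfin
  rw [zetaS_eq_toReal (by norm_num), zetaS_eq_toReal (by norm_num), zetaD_eq_toReal,
    zetaD_eq_toReal, zetaD_eq_toReal, ← ENNReal.toReal_mul, ennZeta_two_mul_ennZeta_three,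
    ENNReal.toReal_add_add hfin, ENNReal.toReal_mul, ENNReal.toReal_mul]
  norm_num

theorem zetaD_add_add_eq_zetaS_five : zetaD 2 3 + zetaD 3 2 + zetaD 4 1 = zetaS 5 := by
  have hfin := ennZeta_ne_top (s := 5) (by norm_num)
  rw [← ennDoubleZeta_add_add_eq_ennZeta_five] at hfin
  rw [zetaS_eq_toReal (by norm_num), zetaD_eq_toReal, zetaD_eq_toReal, zetaD_eq_toReal,
    ← ennDoubleZeta_add_add_eq_ennZeta_five, ENNReal.toReal_add_add hfin]

end MultipleZeta

theorem zeta_3_2 : zetaD 3 2 = 3 * zetaS 2 * zetaS 3 - (11/2) * zetaS 5 := by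
  have stuffle := MultipleZeta.zetaS_mul_zetaS (s := 2) (t := 3) le_rfl (by norm_num)
  have shuffle := MultipleZeta.zetaS_two_mul_zetaS_three
  have sum_formula := MultipleZeta.zetaD_add_add_eq_zetaS_five
  norm_num at stuffle
  linarith
end
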